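/- (Single-model L-optimality, Theorem 4 in finite form.) Let w_1, …, w_N ∈ ℝᵖ and let c_1, …, c_N be nonnegative reals. For φ = (φ_1, …, φ_N) in the open probability simplex, define T_c(φ) = trace( Σ_{i=1}^N (c_i²/φ_i) w_i w_iᵀ ). Then T_c(φ) ≥ (Σ_{i=1}^N c_i ‖w_i‖)² for every φ in the open probability simplex; moreover, if c_i ‖w_i‖ > 0 for every i, then equality holds exactly for the probability vector φ_i = c_i ‖w_i‖ / Σ_{j=1}^N c_j ‖w_j‖, so this choice of φ minimizes T_c. -/

import Mathlib

noncomputable def euclNorm {p : ℕ} (v : Fin p → ℝ) : ℝ :=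
  Real.sqrt (∑ j, v j ^ 2)

lemma trace_vvT {p : ℕ} (v : Fin p → ℝ) :
    (Matrix.vecMulVec v v).trace = euclNorm v ^ 2 := by
  rw [euclNorm, Real.sq_sqrt (Finset.sum_nonneg fun j _ => sq_nonneg _)]
  simp [Matrix.trace, Matrix.diag, Matrix.vecMulVec_apply, sq]

lemma key_identity {N : ℕ} (a φ : Fin N → ℝ) (hφ : ∀ i, 0 < φ i)
    (hs : ∑ i, φ i = 1) :
    ∑ i, a i ^ 2 / φ i - (∑ i, a i) ^ 2
      = ∑ i, (a i / Real.sqrt (φ i) - (∑ j, a j) * Real.sqrt (φ i)) ^ 2 := by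
  set S := ∑ j, a j with hS
  have key : ∀ i, (a i / Real.sqrt (φ i) - S * Real.sqrt (φ i)) ^ 2
      = a i ^ 2 / φ i - 2 * S * a i + S ^ 2 * φ i := by
    intro i
    have h2 : Real.sqrt (φ i) ^ 2 = φ i := Real.sq_sqrt (hφ i).le
    have h0 : Real.sqrt (φ i) ≠ 0 := Real.sqrt_ne_zero'.mpr (hφ i)
    calc (a i / Real.sqrt (φ i) - S * Real.sqrt (φ i)) ^ 2
        = (a i / Real.sqrt (φ i)) ^ 2 - 2 * S * (a i / Real.sqrt (φ i) * Real.sqrt (φ i))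
            + S ^ 2 * Real.sqrt (φ i) ^ 2 := by ring
      _ = a i ^ 2 / φ i - 2 * S * a i + S ^ 2 * φ i := by
          rw [div_pow, h2, div_mul_cancel₀ _ h0]
  rw [Finset.sum_congr rfl fun i _ => key i]
  rw [Finset.sum_add_distrib, Finset.sum_sub_distrib, ← Finset.mul_sum, ← Finset.mul_sum,
    ← hS, hs]
  ring

/-- Single-model L-optimality (Theorem 4, finite form). For vectors
`w₁, …, w_N ∈ ℝᵖ` and nonnegative reals `c₁, …, c_N`, the objective
`T_c(φ) = tr(∑ i, (c i ^ 2 / φ i) • w i w iᵀ)` satisfies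
`T_c(φ) ≥ (∑ i, c i * ‖w i‖)²` over the open probability simplex; moreover, if
`c i * ‖w i‖ > 0` for all `i`, equality holds exactly for the probability vector
`φ i = c i * ‖w i‖ / ∑ j, c j * ‖w j‖`, which hence minimizes `T_c`. -/
theorem single_model_L_optimality {p N : ℕ}
    (w : Fin N → (Fin p → ℝ)) (c : Fin N → ℝ) (hc : ∀ i, 0 ≤ c i) :
    (∀ φ : Fin N → ℝ, (∀ i, 0 < φ i) → (∑ i, φ i) = 1 →
        (∑ i, (c i ^ 2 / φ i) • Matrix.vecMulVec (w i) (w i)).trace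
          ≥ (∑ i, c i * euclNorm (w i)) ^ 2) ∧
      ((∀ i, 0 < c i * euclNorm (w i)) →
        ∀ φ : Fin N → ℝ, (∀ i, 0 < φ i) → (∑ i, φ i) = 1 →
          ((∑ i, (c i ^ 2 / φ i) • Matrix.vecMulVec (w i) (w i)).trace
              = (∑ i, c i * euclNorm (w i)) ^ 2 ↔
            ∀ i, φ i = c i * euclNorm (w i) / (∑ j, c j * euclNorm (w j)))) := by
  set a : Fin N → ℝ := fun i => c i * euclNorm (w i) with ha
  have htr : ∀ φ : Fin N → ℝ,
      (∑ i, (c i ^ 2 / φ i) • Matrix.vecMulVec (w i) (w i)).trace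
        = ∑ i, a i ^ 2 / φ i := by
    intro φ
    rw [Matrix.trace_sum]
    refine Finset.sum_congr rfl fun i _ => ?_
    rw [Matrix.trace_smul, smul_eq_mul, trace_vvT]
    simp only [ha]
    ring
  constructor
  · intro φ hφ hs
    rw [htr, ge_iff_le, ← sub_nonneg, key_identity a φ hφ hs]
    exact Finset.sum_nonneg fun i _ => sq_nonneg _
  · intro hpos φ hφ hs
    rcases (Finset.univ : Finset (Fin N)).eq_empty_or_nonempty with he | hne
    · constructor
      · intro _ i; exact absurd (Finset.mem_univ i) (by simp [he])
      · intro _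
        rw [htr]
        simp [he]
    have hSpos : 0 < ∑ j, a j := Finset.sum_pos (fun i _ => hpos i) hne
    rw [htr]
    constructor
    · intro heq i
      have h0 : ∑ i, (a i / Real.sqrt (φ i) - (∑ j, a j) * Real.sqrt (φ i)) ^ 2 = 0 := by
        rw [← key_identity a φ hφ hs, heq]; ring
      have hzsq := (Finset.sum_eq_zero_iff_of_nonneg (fun i _ => sq_nonneg _)).mp h0 i
        (Finset.mem_univ i)
      have hz : a i / Real.sqrt (φ i) - (∑ j, a j) * Real.sqrt (φ i) = 0 :=
        pow_eq_zero_iff (by norm_num) |>.mp hzsq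
      have h0' : Real.sqrt (φ i) ≠ 0 := Real.sqrt_ne_zero'.mpr (hφ i)
      have hkey : a i = (∑ j, a j) * φ i := by
        have h := sub_eq_zero.mp hz
        have h' := congrArg (· * Real.sqrt (φ i)) h
        rw [div_mul_cancel₀ _ h0', mul_assoc, Real.mul_self_sqrt (hφ i).le] at h'
        exact h'
      show φ i = a i / ∑ j, a j
      rw [hkey, mul_comm, mul_div_assoc, div_self hSpos.ne', mul_one]
    · intro hval
      have hterm : ∀ i, a i ^ 2 / φ i = a i * (∑ j, a j) := by
        intro i
        have hv : φ i = a i / ∑ j, a j := hval i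
        have hai : a i ≠ 0 := ne_of_gt (hpos i)
        rw [hv]
        field_simp
      rw [Finset.sum_congr rfl fun i _ => hterm i, ← Finset.sum_mul]
      ring
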